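/- The leaves of the Sol foliation of ℍ × ℍ, parametrized as (t,x,y) ↦ (x, e^{-t-s}/√2, y, e^{t-s}/√2), have shape operator (with respect to the unit normal field X = y₁ ∂_{y₁} + y₂ ∂_{y₂} and the half-product hyperbolic metric) with eigenvalues -1, -1, 0; the 0-eigendirection is spanned by the tangent vector ∂_t. -/

import Mathlib

/-! Away from the boundary, `∇_v X = (-v₁, 0, -v₃, 0)`: the shape operator is minus the
projection onto the horizontal directions `∂_{x₁}, ∂_{x₂}` and kills the vertical ones.
The tangent vector `∂_t` of a leaf is vertical, and `g(X, X) = 1/2 + 1/2`. -/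

/-- The normal field `X = y₁ ∂_{y₁} + y₂ ∂_{y₂}` on ℍ × ℍ ⊂ ℝ⁴ in coordinates
`(x₁, y₁, x₂, y₂)`. -/
def Xfield (p : ℝ × ℝ × ℝ × ℝ) : ℝ × ℝ × ℝ × ℝ := (0, p.2.1, 0, p.2.2.2)

/-- The half-product hyperbolic metric on ℍ × ℍ applied to tangent vectors `u`, `w`
at the point `p`. -/
noncomputable def gMetric (p u w : ℝ × ℝ × ℝ × ℝ) : ℝ :=
  (u.1 * w.1 + u.2.1 * w.2.1) / (2 * p.2.1 ^ 2)
    + (u.2.2.1 * w.2.2.1 + u.2.2.2 * w.2.2.2) / (2 * p.2.2.2 ^ 2)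

/-- The covariant derivative `∇_v X` of the normal field `X` with respect to the
Levi-Civita connection of the half-product hyperbolic metric, written in coordinates
via the Christoffel symbols of the hyperbolic metric on each factor
(`Γ^x_{xy} = -1/y`, `Γ^y_{xx} = 1/y`, `Γ^y_{yy} = -1/y`); since `X` is linear,
`D_v X = (0, v₂, 0, v₄)`. This is the shape operator applied to `v`. -/
noncomputable def shapeOp (p v : ℝ × ℝ × ℝ × ℝ) : ℝ × ℝ × ℝ × ℝ :=
  (-(1 / p.2.1) * (v.1 * (Xfield p).2.1 + v.2.1 * (Xfield p).1),
   v.2.1 + (1 / p.2.1) * v.1 * (Xfield p).1 - (1 / p.2.1) * v.2.1 * (Xfield p).2.1,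
   -(1 / p.2.2.2) * (v.2.2.1 * (Xfield p).2.2.2 + v.2.2.2 * (Xfield p).2.2.1),
   v.2.2.2 + (1 / p.2.2.2) * v.2.2.1 * (Xfield p).2.2.1
     - (1 / p.2.2.2) * v.2.2.2 * (Xfield p).2.2.2)

theorem gMetric_Xfield_self {p : ℝ × ℝ × ℝ × ℝ} (h₁ : p.2.1 ≠ 0) (h₂ : p.2.2.2 ≠ 0) :
    gMetric p (Xfield p) (Xfield p) = 1 := by
  simp only [gMetric, Xfield]
  field_simp
  ring

theorem shapeOp_eq_neg_horizontal {p : ℝ × ℝ × ℝ × ℝ} (h₁ : p.2.1 ≠ 0) (h₂ : p.2.2.2 ≠ 0)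
    (v : ℝ × ℝ × ℝ × ℝ) : shapeOp p v = (-v.1, 0, -v.2.2.1, 0) := by
  simp only [shapeOp, Xfield, Prod.mk.injEq]
  refine ⟨?_, ?_, ?_, ?_⟩ <;> field_simp <;> ring

/-- At every point `p = (x, e^{-t-s}/√2, y, e^{t-s}/√2)` of a leaf of the Sol foliation
of ℍ × ℍ, the field `X` is a unit normal, and the shape operator has eigenvalues
`-1, -1, 0`: the tangent vectors `∂_{x₁}` and `∂_{x₂}` are eigenvectors with eigenvalue
`-1`, and the `0`-eigendirection is spanned by the image of `∂_t`, namely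
`(0, -e^{-t-s}/√2, 0, e^{t-s}/√2)`. -/
theorem shape_operator_leaf (t s x y : ℝ) :
    let p : ℝ × ℝ × ℝ × ℝ :=
      (x, Real.exp (-t - s) / Real.sqrt 2, y, Real.exp (t - s) / Real.sqrt 2)
    gMetric p (Xfield p) (Xfield p) = 1 ∧
    shapeOp p (1, 0, 0, 0) = ((-1 : ℝ), 0, 0, 0) ∧
    shapeOp p (0, 0, 1, 0) = (0, 0, (-1 : ℝ), 0) ∧
    shapeOp p (0, -(Real.exp (-t - s) / Real.sqrt 2), 0, Real.exp (t - s) / Real.sqrt 2)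
      = (0, 0, 0, 0) := by
  intro p
  have h₁ : p.2.1 ≠ 0 := by positivity
  have h₂ : p.2.2.2 ≠ 0 := by positivity
  refine ⟨gMetric_Xfield_self h₁ h₂, ?_, ?_, ?_⟩ <;> simp [shapeOp_eq_neg_horizontal h₁ h₂]
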